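/- arXiv:1812.06248 — 7 statements merged into one kernel-verified Lean document; each statement's English description precedes it below -/
import Mathlib

section
/- The extension R ↦ R* of binary relations commutes with union: for R, S ⊆ X × X, (R ∪ S)* = R* ∪ S*; moreover it commutes with inversion: (R⁻¹)* = (R*)⁻¹. -/
/-!
Both identities hold for arbitrary filters: `R*(f, g)` says exactly that `R` holds frequently
along the product filter `f ×ˢ g`. "Frequently" distributes over disjunction, and swapping the
factors of a product filter turns `R*` into the extension of the converse relation.
-/

open Filter

namespace Filter

variable {α β : Type*} {f : Filter α} {g : Filter β}

theorem frequently_prod_iff {P : α → β → Prop} :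
    (∃ᶠ p in f ×ˢ g, P p.1 p.2) ↔ ∀ A ∈ f, ∀ B ∈ g, ∃ x ∈ A, ∃ y ∈ B, P x y := by
  simp only [frequently_iff, mem_prod_iff]
  constructor
  · intro h A hA B hB
    obtain ⟨⟨x, y⟩, ⟨hx, hy⟩, hP⟩ := h ⟨A, hA, B, hB, subset_rfl⟩
    exact ⟨x, hx, y, hy, hP⟩
  · rintro h U ⟨A, hA, B, hB, hAB⟩
    obtain ⟨x, hx, y, hy, hP⟩ := h A hA B hB
    exact ⟨(x, y), hAB ⟨hx, hy⟩, hP⟩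

theorem frequently_prod_swap {P : α → β → Prop} :
    (∃ᶠ p in g ×ˢ f, P p.2 p.1) ↔ ∃ᶠ p in f ×ˢ g, P p.1 p.2 := by
  rw [prod_comm, frequently_map]
  rfl

end Filter

theorem stmt5 {X : Type*} (R S : X → X → Prop) (u v : Ultrafilter X) :
    ((∀ A ∈ u, ∀ B ∈ v, ∃ x ∈ A, ∃ y ∈ B, R x y ∨ S x y) ↔
      ((∀ A ∈ u, ∀ B ∈ v, ∃ x ∈ A, ∃ y ∈ B, R x y) ∨
        (∀ A ∈ u, ∀ B ∈ v, ∃ x ∈ A, ∃ y ∈ B, S x y))) ∧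
    ((∀ A ∈ u, ∀ B ∈ v, ∃ x ∈ A, ∃ y ∈ B, R y x) ↔
      (∀ B ∈ v, ∀ A ∈ u, ∃ y ∈ B, ∃ x ∈ A, R y x)) := by
  simp only [← Ultrafilter.mem_coe, ← frequently_prod_iff]
  exact ⟨frequently_or_distrib, frequently_prod_swap⟩
end

section
/- Let X₁,…,Xₙ be topological spaces with dense subsets D₁,…,Dₙ, and let Y be a Hausdorff space. If two n-ary maps f, g : X₁ × … × Xₙ → Y are both right continuous with respect to D₁,…,D_{n-1} (i.e. for each i, fixing points of D₁,…,D_{i-1} in the first i−1 coordinates and arbitrary points in coordinates i+1,…,n, the resulting unary map on X_i is continuous) and f, g coincide on D₁ × … × Dₙ, then f = g. It suffices to prove the case n = 2: if f, g : X₁ × X₂ → Y satisfy: x ↦ f(x, x₂) is continuous for every x₂ ∈ X₂, x ↦ f(a, x) is continuous for every a ∈ D₁ (and likewise for g), and f = g on D₁ × D₂, then f = g. -/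
theorem stmt8 {X₁ X₂ Y : Type*} [TopologicalSpace X₁] [TopologicalSpace X₂]
    [TopologicalSpace Y] [T2Space Y]
    (D₁ : Set X₁) (D₂ : Set X₂) (hD₁ : Dense D₁) (hD₂ : Dense D₂)
    (f g : X₁ × X₂ → Y)
    (hf1 : ∀ x₂ : X₂, Continuous fun x => f (x, x₂))
    (hf2 : ∀ a ∈ D₁, Continuous fun x => f (a, x))
    (hg1 : ∀ x₂ : X₂, Continuous fun x => g (x, x₂))
    (hg2 : ∀ a ∈ D₁, Continuous fun x => g (a, x))
    (heq : ∀ a ∈ D₁, ∀ b ∈ D₂, f (a, b) = g (a, b)) :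
    f = g := by
  have slice_eq (a : X₁) (ha : a ∈ D₁) : (fun x => f (a, x)) = fun x => g (a, x) :=
    Continuous.ext_on hD₂ (hf2 a ha) (hg2 a ha) (heq a ha)
  funext ⟨x₁, x₂⟩
  exact congrFun (Continuous.ext_on hD₁ (hf1 x₂) (hg1 x₂)
    fun a ha => congrFun (slice_eq a ha) x₂) x₁
end

section
/- Let X₁, X₂ be topological spaces, D₁ ⊆ X₁, and Y a Hausdorff space. The set RC of binary maps X₁ × X₂ → Y right continuous w.r.t. D₁, endowed with the topology of pointwise convergence at points of D₁ × D₂ for dense D₁ ⊆ X₁, D₂ ⊆ X₂ (subbasic open sets O_{a,B} = {f ∈ RC : f(a) ∈ B} for a ∈ D₁ × D₂ and open B ⊆ Y), is a Hausdorff topological space. -/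
/-! Restriction to `D₁ × D₂` is continuous into the Hausdorff product `D₁ × D₂ → Y`, and it is
injective: two maps agreeing on `D₁ × D₂` agree on `D₁ × X₂` by continuity in the second variable
at points of `D₁`, hence everywhere by continuity in the first variable. -/

/-- Binary maps `X₁ × X₂ → Y` that are right continuous w.r.t. `D₁`. -/
def RCbin {X₁ X₂ Y : Type*} [TopologicalSpace X₁] [TopologicalSpace X₂] [TopologicalSpace Y]
    (D₁ : Set X₁) : Type _ :=
  {f : X₁ × X₂ → Y //
    (∀ x₂ : X₂, Continuous fun x => f (x, x₂)) ∧ ∀ a ∈ D₁, Continuous fun x => f (a, x)}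

theorem RCbin.ext_of_dense {X₁ X₂ Y : Type*} [TopologicalSpace X₁] [TopologicalSpace X₂]
    [TopologicalSpace Y] [T2Space Y] {D₁ : Set X₁} {D₂ : Set X₂} (hD₁ : Dense D₁)
    (hD₂ : Dense D₂) {f g : RCbin (X₂ := X₂) (Y := Y) D₁}
    (h : ∀ a₁ ∈ D₁, ∀ a₂ ∈ D₂, f.1 (a₁, a₂) = g.1 (a₁, a₂)) : f = g := by
  have h_slice : ∀ a₁ ∈ D₁, ∀ x₂, f.1 (a₁, x₂) = g.1 (a₁, x₂) := fun a₁ ha₁ =>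
    congrFun (Continuous.ext_on hD₂ (f.2.2 a₁ ha₁) (g.2.2 a₁ ha₁) (h a₁ ha₁))
  refine Subtype.ext (funext fun ⟨x₁, x₂⟩ => ?_)
  exact congrFun (Continuous.ext_on hD₁ (f.2.1 x₂) (g.2.1 x₂) fun a₁ ha₁ => h_slice a₁ ha₁ x₂) x₁

theorem stmt9 {X₁ X₂ Y : Type*} [TopologicalSpace X₁] [TopologicalSpace X₂] [TopologicalSpace Y]
    [T2Space Y] (D₁ : Set X₁) (D₂ : Set X₂) (hD₁ : Dense D₁) (hD₂ : Dense D₂) :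
    @T2Space (RCbin (X₂ := X₂) (Y := Y) D₁)
      (TopologicalSpace.generateFrom
        {S | ∃ a₁ ∈ D₁, ∃ a₂ ∈ D₂, ∃ B : Set Y, IsOpen B ∧
          S = {f : RCbin (X₂ := X₂) (Y := Y) D₁ | f.1 (a₁, a₂) ∈ B}}) := by
  let : TopologicalSpace (RCbin (X₂ := X₂) (Y := Y) D₁) :=
    TopologicalSpace.generateFrom
      {S | ∃ a₁ ∈ D₁, ∃ a₂ ∈ D₂, ∃ B : Set Y, IsOpen B ∧
        S = {f : RCbin (X₂ := X₂) (Y := Y) D₁ | f.1 (a₁, a₂) ∈ B}}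
  let restrict : RCbin (X₂ := X₂) (Y := Y) D₁ → D₁ × D₂ → Y := fun f p => f.1 (p.1, p.2)
  have restrict_injective : Function.Injective restrict := fun f g hfg =>
    RCbin.ext_of_dense hD₁ hD₂ fun a₁ ha₁ a₂ ha₂ => congrFun hfg (⟨a₁, ha₁⟩, ⟨a₂, ha₂⟩)
  have restrict_continuous : Continuous restrict :=
    continuous_pi fun p => continuous_def.2 fun B hB =>
      TopologicalSpace.isOpen_generateFrom_of_mem ⟨p.1, p.1.2, p.2, p.2.2, B, hB, rfl⟩
  exact .of_injective_continuous restrict_injective restrict_continuous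
end

section
/- Let X be a discrete space and Y a compact Hausdorff space. The set C(βX, Y) of continuous maps from the space of ultrafilters over X to Y, endowed with the topology of pointwise convergence at principal ultrafilters (subbasic open sets {f : f(a) ∈ B} for a ∈ X, B ⊆ Y open), is homeomorphic to the product space Y^X; in particular it is compact Hausdorff. -/
/-!
Restriction to the principal ultrafilters `f ↦ f ∘ pure` is a bijection `C(βX, Y) → Y^X`: it is
onto because every map `X → Y` into a compact Hausdorff space extends continuously to `βX`, and
one-to-one because the principal ultrafilters are dense in `βX` and `Y` is Hausdorff. The
topology of pointwise convergence at principal ultrafilters is by definition the one induced by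
this bijection from the product topology, so it is a homeomorphism and `C(βX, Y)` inherits
compactness and the Hausdorff property from `Y^X`.
-/

/-- Continuous maps from the space of ultrafilters over `X` into `Y`. -/
def ContUltra (X Y : Type*) [TopologicalSpace Y] : Type _ :=
  {f : Ultrafilter X → Y // Continuous f}

/-- The topology of pointwise convergence at principal ultrafilters on `ContUltra X Y`. -/
def principalTop (X Y : Type*) [TopologicalSpace Y] : TopologicalSpace (ContUltra X Y) :=
  TopologicalSpace.generateFrom
    {S | ∃ (a : X) (B : Set Y), IsOpen B ∧ S = {f : ContUltra X Y | f.1 (pure a) ∈ B}}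

namespace ContUltra

variable {X Y : Type*} [TopologicalSpace Y]

def restrict (f : ContUltra X Y) : X → Y :=
  f.1 ∘ pure

theorem principalTop_eq_induced_restrict :
    principalTop X Y = TopologicalSpace.induced restrict Pi.topologicalSpace := by
  simp_rw [Pi.topologicalSpace, induced_iInf, induced_compose]
  rw [← generateFrom_iUnion_isOpen, principalTop]
  congr 1
  ext S
  simp only [isOpen_induced_iff, Set.mem_iUnion, Set.mem_ofPred_eq]
  exact exists_congr fun a => exists_congr fun B => and_congr_right fun _ => eq_comm

theorem isInducing_restrict : @Topology.IsInducing _ _ (principalTop X Y) _ restrict :=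
  @Topology.IsInducing.mk _ _ (principalTop X Y) _ _ principalTop_eq_induced_restrict

variable [CompactSpace Y] [T2Space Y]

noncomputable def extend (g : X → Y) : ContUltra X Y :=
  ⟨Ultrafilter.extend g, continuous_ultrafilter_extend g⟩

theorem restrict_extend (g : X → Y) : restrict (extend g) = g :=
  ultrafilter_extend_extends g

theorem extend_restrict (f : ContUltra X Y) : extend (restrict f) = f :=
  Subtype.ext <| denseRange_pure.equalizer (continuous_ultrafilter_extend _) f.2 <|
    ultrafilter_extend_extends _

noncomputable def restrictEquiv : ContUltra X Y ≃ (X → Y) where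
  toFun := restrict
  invFun := extend
  left_inv := extend_restrict
  right_inv := restrict_extend

noncomputable def restrictHomeomorph : @Homeomorph (ContUltra X Y) (X → Y) (principalTop X Y) _ :=
  @Equiv.toHomeomorphOfIsInducing _ _ (principalTop X Y) _ restrictEquiv isInducing_restrict

end ContUltra

theorem stmt10 {X Y : Type*} [TopologicalSpace Y] [CompactSpace Y] [T2Space Y] :
    (∃ e : @Homeomorph (ContUltra X Y) (X → Y) (principalTop X Y) inferInstance,
        ∀ (f : ContUltra X Y) (a : X), e f a = f.1 (pure a)) ∧
    @CompactSpace (ContUltra X Y) (principalTop X Y) ∧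
    @T2Space (ContUltra X Y) (principalTop X Y) := by
  let := principalTop X Y
  let e := ContUltra.restrictHomeomorph (X := X) (Y := Y)
  exact ⟨⟨e, fun _ _ => rfl⟩, e.symm.compactSpace, e.symm.t2Space⟩
end

section
/- Let X be an infinite discrete space and Y a compact Hausdorff space with at least two points. The evaluation map ext : Y^X → C(βX, Y), g ↦ g̃, has a continuous extension ẽxt : β(Y^X) → C(βX, Y) (where Y^X is discrete and C(βX, Y) carries the topology of pointwise convergence at principal ultrafilters), and ẽxt is surjective but not injective. -/
/-!
Since `X` is dense in `βX` and `Y` is Hausdorff, an element of `C(βX, Y)` is determined by its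
values at principal ultrafilters, and a map into `C(βX, Y)` is continuous iff each of these
values depends continuously on the argument. Hence a continuous extension of `g ↦ g̃` is forced
to send `U` to the map whose value at `pure a` is the `U`-limit of `g ↦ g a`; this map exists,
so the extension is unique. It hits `g̃` at `pure g`, so it is surjective. It is not injective:
along a nonprincipal ultrafilter on `X`, the functions equal to `y₁` except for the value `y₂`
at one moving point converge pointwise to the constant `y₁`, yet never equal it.
-/

open Filter Topology Function

namespace ContUltra

variable {X Y : Type*} [TopologicalSpace Y]

theorem ext_pure [T2Space Y] {f g : ContUltra X Y} (h : ∀ a, f.1 (pure a) = g.1 (pure a)) :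
    f = g :=
  Subtype.ext <| denseRange_pure.equalizer f.2 g.2 (funext h)

theorem continuous_principalTop_iff {Z : Type*} [TopologicalSpace Z] {e : Z → ContUltra X Y} :
    @Continuous _ _ _ (principalTop X Y) e ↔ ∀ a : X, Continuous fun z => (e z).1 (pure a) := by
  rw [principalTop, continuous_generateFrom_iff]
  constructor
  · intro he a
    exact continuous_def.2 fun B hB => he _ ⟨a, B, hB, rfl⟩
  · rintro he _ ⟨a, B, hB, rfl⟩
    exact (he a).isOpen_preimage B hB

variable [CompactSpace Y] [T2Space Y]

/-- The continuous extension `ẽxt` of `g ↦ g̃`. -/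
noncomputable def extEval (U : Ultrafilter (X → Y)) : ContUltra X Y :=
  ⟨Ultrafilter.extend fun a => Ultrafilter.extend (fun g : X → Y => g a) U,
    continuous_ultrafilter_extend _⟩

theorem extEval_apply_pure (U : Ultrafilter (X → Y)) (a : X) :
    (extEval U).1 (pure a) = Ultrafilter.extend (fun g : X → Y => g a) U :=
  ultrafilter_extend_pure _ a

theorem extEval_pure_apply_pure (g : X → Y) (a : X) : (extEval (pure g)).1 (pure a) = g a := by
  rw [extEval_apply_pure, ultrafilter_extend_pure]

theorem continuous_extEval :
    @Continuous _ _ _ (principalTop X Y) (extEval : Ultrafilter (X → Y) → ContUltra X Y) :=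
  continuous_principalTop_iff.2 fun a => by
    simpa only [extEval_apply_pure] using continuous_ultrafilter_extend _

theorem eq_extEval {e : Ultrafilter (X → Y) → ContUltra X Y}
    (he : @Continuous _ _ _ (principalTop X Y) e)
    (he_pure : ∀ (g : X → Y) (a : X), (e (pure g)).1 (pure a) = g a) : e = extEval := by
  funext U
  refine ext_pure fun a => ?_
  have hU := denseRange_pure.equalizer (continuous_principalTop_iff.1 he a)
    (continuous_principalTop_iff.1 continuous_extEval a)
    (funext fun g => by simp only [comp_apply, he_pure, extEval_pure_apply_pure])
  exact congrFun hU U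

theorem extEval_surjective : Surjective (extEval : Ultrafilter (X → Y) → ContUltra X Y) :=
  fun f => ⟨pure fun a => f.1 (pure a), ext_pure fun a => extEval_pure_apply_pure _ a⟩

theorem not_injective_extEval [Infinite X] {y₁ y₂ : Y} (hy : y₁ ≠ y₂) :
    ¬ Injective (extEval : Ultrafilter (X → Y) → ContUltra X Y) := by
  classical
  intro hinj
  let W : Ultrafilter X := Ultrafilter.of cofinite
  let bump : X → X → Y := fun x => update (fun _ => y₁) x y₂
  have hbump (a : X) : (fun x => bump x a) =ᶠ[W] fun _ => y₁ :=
    Ultrafilter.of_le _ <| (eventually_cofinite_ne a).mono fun x hx => update_of_ne hx.symm _ _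
  have hlim : extEval (W.map bump) = extEval (pure fun _ => y₁) := ext_pure fun a => by
    rw [extEval_apply_pure, extEval_pure_apply_pure, ultrafilter_extend_eq_iff]
    exact (tendsto_const_nhds.congr' (hbump a).symm : Tendsto (fun x => bump x a) W (𝓝 y₁))
  have hmem : {fun _ => y₁} ∈ W.map bump := hinj hlim ▸ rfl
  obtain ⟨x, hx⟩ := Ultrafilter.nonempty_of_mem (Ultrafilter.mem_map.1 hmem)
  have hx' : bump x x = y₁ := congrFun hx x
  exact hy (hx'.symm.trans (update_self x y₂ fun _ => y₁))

end ContUltra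

open ContUltra in
theorem stmt12 {X Y : Type*} [Infinite X] [TopologicalSpace Y] [CompactSpace Y] [T2Space Y]
    (hY : ∃ y₁ y₂ : Y, y₁ ≠ y₂) :
    (∃ e : Ultrafilter (X → Y) → ContUltra X Y,
        @Continuous _ _ _ (principalTop X Y) e ∧
        ∀ (g : X → Y) (a : X), (e (pure g)).1 (pure a) = g a) ∧
    (∀ e : Ultrafilter (X → Y) → ContUltra X Y,
        @Continuous _ _ _ (principalTop X Y) e →
        (∀ (g : X → Y) (a : X), (e (pure g)).1 (pure a) = g a) →
        Function.Surjective e ∧ ¬ Function.Injective e) := by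
  obtain ⟨y₁, y₂, hy⟩ := hY
  refine ⟨⟨extEval, continuous_extEval, extEval_pure_apply_pure⟩, fun e he he_pure => ?_⟩
  rw [eq_extEval he he_pure]
  exact ⟨extEval_surjective, not_injective_extEval hy⟩
end

section
/- Let X, Y be sets and 𝔣 an ultrafilter over Y^X. Define app̃(u, 𝔣) for an ultrafilter u over X as the ultrafilter {S ⊆ Y : {x : {g : g(x) ∈ S} ∈ 𝔣} ∈ u} over Y. Then 𝔣 is pseudo-principal (app̃(a, 𝔣) is principal for each principal a) if and only if the map u ↦ app̃(u, 𝔣) equals f̃ for some f : X → Y, namely f(a) is the point generating app̃(a, 𝔣); here f̃ is the unique continuous extension of f to ultrafilters. -/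
/-- The extended application map: `appTilde u 𝔣` is the ultrafilter over `Y` with
`S ∈ appTilde u 𝔣` iff `{x | {g | g x ∈ S} ∈ 𝔣} ∈ u`. -/
def appTilde {X Y : Type*} (u : Ultrafilter X) (𝔣 : Ultrafilter (X → Y)) : Ultrafilter Y :=
  u.bind fun x => 𝔣.map fun g => g x

/-!
`appTilde u 𝔣` is the bind of `u` along its values `a ↦ appTilde (pure a) 𝔣` at principal
ultrafilters. If each of these is principal, `pure (f a)`, then binding along `pure ∘ f` is
pushing forward along `f`; conversely the pushforward of `pure a` along `f` is `pure (f a)`.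
-/

namespace Ultrafilter

variable {α β : Type*}

theorem bind_pure_comp (u : Ultrafilter α) (f : α → β) :
    u.bind (fun x => pure (f x)) = u.map f :=
  rfl

end Ultrafilter

section appTilde

variable {X Y : Type*} (𝔣 : Ultrafilter (X → Y))

theorem appTilde_eq_bind (u : Ultrafilter X) :
    appTilde u 𝔣 = u.bind fun a => appTilde (pure a) 𝔣 :=
  rfl

variable {𝔣}

theorem appTilde_eq_map_of_appTilde_pure {f : X → Y}
    (hf : ∀ a, appTilde (pure a) 𝔣 = pure (f a)) (u : Ultrafilter X) :
    appTilde u 𝔣 = u.map f := by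
  rw [appTilde_eq_bind, funext hf, Ultrafilter.bind_pure_comp]

theorem appTilde_pure_of_appTilde_eq_map {f : X → Y}
    (hf : ∀ u : Ultrafilter X, appTilde u 𝔣 = u.map f) (a : X) :
    appTilde (pure a) 𝔣 = pure (f a) := by
  rw [hf, Ultrafilter.map_pure]

end appTilde

theorem stmt15 {X Y : Type*} (𝔣 : Ultrafilter (X → Y)) :
    (∀ (u : Ultrafilter X) (S : Set Y),
        S ∈ appTilde u 𝔣 ↔ {x : X | {g : X → Y | g x ∈ S} ∈ 𝔣} ∈ u) ∧
    ((∀ a : X, ∃ y : Y, appTilde (pure a) 𝔣 = pure y) ↔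
      ∃ f : X → Y, ∀ u : Ultrafilter X, appTilde u 𝔣 = u.map f) ∧
    (∀ f : X → Y, (∀ u : Ultrafilter X, appTilde u 𝔣 = u.map f) →
      ∀ a : X, appTilde (pure a) 𝔣 = pure (f a)) := by
  refine ⟨fun u S => Iff.rfl, ⟨fun h => ?_, ?_⟩, fun f => appTilde_pure_of_appTilde_eq_map⟩
  · choose f hf using h
    exact ⟨f, appTilde_eq_map_of_appTilde_pure hf⟩
  · rintro ⟨f, hf⟩ a
    exact ⟨f a, appTilde_pure_of_appTilde_eq_map hf a⟩
end

section
/- Let X be an infinite discrete space and Y a compact Hausdorff space with more than one point. The set C(βX, βY) of continuous maps from βX to βY is not closed in the product space (βY)^{βX} with the topology of pointwise convergence; equivalently, C(βX, βY) with the full pointwise convergence topology is not compact. In particular, for every map h : βX → βY (possibly discontinuous) there is an ultrafilter over C(βX, βY) converging to h in (βY)^{βX}. -/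
/-!
Finitely many distinct points of `βX` have pairwise disjoint members `A_p ∈ p`, so any map
`h : βX → Z` into a compact Hausdorff space agrees on them with the continuous extension of a
function `X → Z` equal to `h p` on `A_p`. Hence the continuous maps are dense in `Z ^ βX`.
They are not all of it: for infinite `X` the map taking one value at a free ultrafilter and
another everywhere else is discontinuous, since free ultrafilters are not isolated in `βX`.
-/

open Filter Set Topology

theorem not_continuous_of_not_isOpen_singleton {α Z : Type*} [TopologicalSpace α]
    [TopologicalSpace Z] [T1Space Z] {f : α → Z} {a : α} (ha : ¬ IsOpen {a}) {z : Z}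
    (hfa : f a ≠ z) (hf : ∀ b ≠ a, f b = z) : ¬ Continuous f := fun hc =>
  hfa <| by
    simpa using map_mem_closure hc (dense_compl_singleton_iff_not_open.2 ha a)
      fun b hb => mem_singleton_iff.2 (hf b hb)

theorem exists_ultrafilter_map_val_le_nhds {α : Type*} [TopologicalSpace α] {s : Set α} {x : α}
    (hx : x ∈ closure s) : ∃ 𝔣 : Ultrafilter s, (𝔣.map Subtype.val : Filter α) ≤ 𝓝 x := by
  have := mem_closure_iff_comap_neBot.1 hx
  exact ⟨Ultrafilter.of _, (map_mono (Ultrafilter.of_le _)).trans map_comap_le⟩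

namespace Ultrafilter

variable {X Z : Type*}

theorem exists_pairwiseDisjoint_mem {I : Set (Ultrafilter X)} (hI : I.Finite) :
    ∃ s : Ultrafilter X → Set X, (∀ p, s p ∈ p) ∧ I.PairwiseDisjoint s := by
  obtain ⟨U, hU, hdisj⟩ := hI.t2_separation
  refine ⟨fun p => pure ⁻¹' U p, fun p => ?_, fun p hp q hq hpq => (hdisj hp hq hpq).preimage _⟩
  exact tendsto_pure_self p ((hU p).2.mem_nhds (hU p).1)

theorem not_isOpen_singleton {p : Ultrafilter X} (hp : p ∉ range pure) : ¬ IsOpen {p} :=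
  fun hopen => hp <| (denseRange_pure.exists_mem_open hopen (singleton_nonempty p)).imp
    fun _ => id

variable [TopologicalSpace Z] [T2Space Z] [CompactSpace Z]

theorem exists_continuous_eqOn {I : Set (Ultrafilter X)} (hI : I.Finite)
    (h : Ultrafilter X → Z) : ∃ f : Ultrafilter X → Z, Continuous f ∧ EqOn f h I := by
  classical
  obtain ⟨s, hs, hdisj⟩ := exists_pairwiseDisjoint_mem hI
  let g : X → Z := fun x => if hx : ∃ p ∈ I, x ∈ s p then h hx.choose else h (pure x)
  have hg : ∀ p ∈ I, ∀ x ∈ s p, g x = h p := by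
    intro p hp x hx
    have hex : ∃ q ∈ I, x ∈ s q := ⟨p, hp, hx⟩
    obtain ⟨hq, hxq⟩ := hex.choose_spec
    simp only [g, dif_pos hex]
    rw [hdisj.elim hq hp (not_disjoint_iff.2 ⟨x, hxq, hx⟩)]
  refine ⟨Ultrafilter.extend g, continuous_ultrafilter_extend g, fun p hp => ?_⟩
  refine ultrafilter_extend_eq_iff.2 (le_trans ?_ (pure_le_nhds _))
  exact le_pure_iff.2 (mem_map.2 (mem_of_superset (hs p) fun x hx => hg p hp x hx))

theorem dense_setOf_continuous : Dense {f : Ultrafilter X → Z | Continuous f} := by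
  refine fun h => mem_closure_iff.2 fun o ho hho => ?_
  obtain ⟨I, u, hu, hsub⟩ := isOpen_pi_iff.1 ho h hho
  obtain ⟨f, hf, hfh⟩ := exists_continuous_eqOn I.finite_toSet h
  exact ⟨f, hsub fun p hp => hfh hp ▸ (hu p hp).2, hf⟩

theorem not_isClosed_setOf_continuous [Infinite X] {z₁ z₂ : Z} (hz : z₁ ≠ z₂) :
    ¬ IsClosed {f : Ultrafilter X → Z | Continuous f} := by
  classical
  intro hclosed
  have hfree : hyperfilter X ∉ range pure := by
    rintro ⟨x, hx⟩
    exact notMem_hyperfilter_of_finite (finite_singleton x) (hx ▸ mem_pure.2 rfl)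
  let f : Ultrafilter X → Z := fun p => if p = hyperfilter X then z₁ else z₂
  refine not_continuous_of_not_isOpen_singleton (f := f) (not_isOpen_singleton hfree)
    (by simpa [f] using hz) (fun p hp => if_neg hp) ?_
  simpa only [hclosed.closure_eq, mem_ofPred_eq] using dense_setOf_continuous f

end Ultrafilter

theorem stmt19 {X Y : Type*} [Infinite X] (hY : ∃ y₁ y₂ : Y, y₁ ≠ y₂) :
    ¬ IsClosed {f : Ultrafilter X → Ultrafilter Y | Continuous f} ∧
    ¬ IsCompact {f : Ultrafilter X → Ultrafilter Y | Continuous f} ∧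
    ∀ h : Ultrafilter X → Ultrafilter Y,
      ∃ 𝔣 : Ultrafilter {f : Ultrafilter X → Ultrafilter Y // Continuous f},
        ((𝔣.map Subtype.val : Ultrafilter (Ultrafilter X → Ultrafilter Y)) :
          Filter (Ultrafilter X → Ultrafilter Y)) ≤ nhds h := by
  obtain ⟨y₁, y₂, hy⟩ := hY
  have hnotClosed :=
    Ultrafilter.not_isClosed_setOf_continuous (X := X) (Ultrafilter.pure_injective.ne hy)
  exact ⟨hnotClosed, fun hcompact => hnotClosed hcompact.isClosed,
    fun h => exists_ultrafilter_map_val_le_nhds (Ultrafilter.dense_setOf_continuous h)⟩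
end
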